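/- arXiv:1603.04682 — 3 statements merged into one kernel-verified Lean document; each statement's English description precedes it below -/
import Mathlib

section
/- Consider the switched positive linear delay system dx/dt = A_{σ(t)}x(t) + (𝒫_{σ(t)}x)(t) + (Q_{σ(t)}∗x)(t), where σ : [0,∞) → {1,…,n} is a piecewise-constant switching signal, each Aᵢ is an n×n Metzler matrix, (𝒫ᵢx)(t) has k-th component pᵢᵏ x_k(t−dᵢᵏ) with constants pᵢᵏ ≥ 0 and delays dᵢᵏ ∈ [0,T], Qᵢ(t) = diag(qᵢ¹(t),…,qᵢⁿ(t)) with each qᵢᵏ : [0,∞) → ℝ₊ continuous and supported in [0,T], and (Qᵢ∗x)(t) = ∫₀^∞ Qᵢ(τ)x(t−τ)dτ. If x : [−T,∞) → ℝⁿ is continuous, differentiable on (0,∞), satisfies the delay equation for all t ≥ 0, and x(s) ≥ 0 componentwise for all s ∈ [−T,0], then x(t) ≥ 0 componentwise for all t ≥ 0. -/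
open MeasureTheory Matrix
open scoped Kronecker

noncomputable section

/-- The 1-norm `‖x‖₁ = ∑ i |x i|`. -/
def oneNorm {ι : Type*} [Fintype ι] (x : ι → ℝ) : ℝ := ∑ i, |x i|

/-- A square real matrix is Metzler if its off-diagonal entries are nonnegative. -/
def IsMetzler {ι : Type*} [Fintype ι] (A : Matrix ι ι ℝ) : Prop :=
  ∀ i j, i ≠ j → 0 ≤ A i j

/-- A square real matrix is Hurwitz stable if all of its (complex) eigenvalues have
negative real parts. -/
def IsHurwitz {ι : Type*} [Fintype ι] [DecidableEq ι] (A : Matrix ι ι ℝ) : Prop :=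
  ∀ z ∈ spectrum ℂ (A.map (Complex.ofReal)), z.re < 0

/-- The matrix exponential `e^A`. -/
def matExp {ι : Type*} [Fintype ι] [DecidableEq ι] (A : Matrix ι ι ℝ) : Matrix ι ι ℝ :=
  NormedSpace.exp A

/-- The `i`-th canonical basis vector of `ℝⁿ`. -/
def basisVec {n : ℕ} (i : Fin n) : Fin n → ℝ := fun k => if k = i then 1 else 0

/-- Kronecker product of two vectors: `(u ⊗ v)_{(i,j)} = uᵢ vⱼ`. -/
def vecKron {n : ℕ} (u v : Fin n → ℝ) : Fin n × Fin n → ℝ := fun p => u p.1 * v p.2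

/-- Kronecker product `M ⊗ vᵀ` of an `n×n` matrix with a row vector: an `n × n²` matrix. -/
def matKronRow {n : ℕ} (M : Matrix (Fin n) (Fin n) ℝ) (v : Fin n → ℝ) :
    Matrix (Fin n) (Fin n × Fin n) ℝ := Matrix.of fun k p => M k p.1 * v p.2

/-- Kronecker product `u ⊗ F` of a column vector with an `n × n²` matrix: an `n² × n²` matrix. -/
def vecKronMat {n : ℕ} (u : Fin n → ℝ) (F : Matrix (Fin n) (Fin n × Fin n) ℝ) :
    Matrix (Fin n × Fin n) (Fin n × Fin n) ℝ := Matrix.of fun q p => u q.1 * F q.2 p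

/-- Kronecker product `rᵀ ⊗ Iₙ` of a row vector with the identity: an `n × n²` matrix
with block structure `[r₁ Iₙ … rₙ Iₙ]`. -/
def rowKronId {n : ℕ} (r : Fin n → ℝ) : Matrix (Fin n) (Fin n × Fin n) ℝ :=
  Matrix.of fun k p => r p.1 * (if k = p.2 then 1 else 0)

/-- Block-diagonal matrix `⨁ᵢ Aᵢ`. -/
def blockDiag {n : ℕ} (A : Fin n → Matrix (Fin n) (Fin n) ℝ) :
    Matrix (Fin n × Fin n) (Fin n × Fin n) ℝ :=
  Matrix.of fun q p => if q.1 = p.1 then A q.1 q.2 p.2 else 0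

/-- A piecewise-constant switching signal: constant between consecutive members of an
unbounded increasing sequence of switching times starting at `0`. -/
def PiecewiseConstant {α : Type*} (σ : ℝ → α) : Prop :=
  ∃ u : ℕ → ℝ, StrictMono u ∧ u 0 = 0 ∧ Filter.Tendsto u Filter.atTop Filter.atTop ∧
    ∀ k : ℕ, ∀ t ∈ Set.Ico (u k) (u (k + 1)), σ t = σ (u k)

/-- Right-hand side of the switched positive linear delay system
`dx/dt = A_{σ(t)} x(t) + (𝒫_{σ(t)} x)(t) + (Q_{σ(t)} ∗ x)(t)`, where
`(𝒫ᵢ x)(t)ₖ = pᵢᵏ xₖ(t − dᵢᵏ)` and `(Qᵢ ∗ x)(t)ₖ = ∫₀^∞ qᵢᵏ(τ) xₖ(t−τ) dτ`. -/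
def swRHS {n : ℕ} (σ : ℝ → Fin n) (A : Fin n → Matrix (Fin n) (Fin n) ℝ)
    (p : Fin n → Fin n → ℝ) (d : Fin n → Fin n → ℝ) (q : Fin n → Fin n → ℝ → ℝ)
    (x : ℝ → Fin n → ℝ) (t : ℝ) : Fin n → ℝ :=
  (A (σ t)).mulVec (x t) + (fun k => p (σ t) k * x (t - d (σ t) k) k) +
    ∫ τ in Set.Ici (0 : ℝ), (fun k => q (σ t) k τ * x (t - τ) k)

/-! If every component of the history on `[-T, t]` is `≥ -E` and the `k`-th one equals `-E` at
time `t`, the Metzler property and the nonnegativity of the delay and convolution kernels give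
`ẋₖ(t) ≥ -L E` for a constant `L`. Hence for `M > L` and `ε > 0` no component of
`x + ε e^{M t}` can reach `0`: at the first time `t₁` one did, with `E = ε e^{M t₁}`, its
derivative would be at least `(M - L) E > 0` although it decreases to `0` from the left.
Letting `ε → 0` gives `x ≥ 0`. -/

open Set

theorem HasDerivAt.nonpos_of_forall_Ioo_le {f : ℝ → ℝ} {f' a b : ℝ} (hf : HasDerivAt f f' b)
    (hab : a < b) (hle : ∀ s ∈ Ioo a b, f b ≤ f s) : f' ≤ 0 := by
  refine le_of_tendsto (hasDerivAt_iff_tendsto_slope_left_right.1 hf).1 ?_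
  filter_upwards [Ioo_mem_nhdsLT hab] with s hs
  rw [slope_def_field]
  exact div_nonpos_of_nonneg_of_nonpos (sub_nonneg.2 (hle s hs)) (sub_nonpos.2 hs.2.le)

theorem ContinuousOn.exists_first_zero {ι : Type*} [Finite ι] {y : ℝ → ι → ℝ}
    (hy : ContinuousOn y (Ici 0)) (h0 : ∀ j, 0 < y 0 j) (hneg : ∃ t ≥ 0, ∃ k, y t k ≤ 0) :
    ∃ t₁ > 0, (∀ s ∈ Icc 0 t₁, ∀ j, 0 ≤ y s j) ∧ ∃ k, y t₁ k = 0 := by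
  have hyj : ∀ j, ContinuousOn (fun t => y t j) (Ici 0) := continuousOn_pi.1 hy
  set S : Set ℝ := ⋃ k, Ici 0 ∩ (fun t => y t k) ⁻¹' Iic 0
  have hS : IsClosed S := isClosed_iUnion_of_finite fun k =>
    (hyj k).preimage_isClosed_of_isClosed isClosed_Ici isClosed_Iic
  have hSbdd : BddBelow S := ⟨0, by simp +contextual [S, lowerBounds]⟩
  obtain ⟨t, ht, k, hk⟩ := hneg
  have hSne : S.Nonempty := ⟨t, mem_iUnion.2 ⟨k, ht, hk⟩⟩
  obtain ⟨k, ht₁0, hk₁⟩ := mem_iUnion.1 (hS.csInf_mem hSne hSbdd)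
  set t₁ := sInf S
  have ht₁ : 0 < t₁ := lt_of_le_of_ne ht₁0 fun h => (h0 k).not_ge (h ▸ hk₁)
  have hbefore : ∀ s ∈ Ico 0 t₁, ∀ j, 0 ≤ y s j := fun s hs j =>
    le_of_not_ge fun h => hs.2.not_ge (csInf_le hSbdd (mem_iUnion.2 ⟨j, hs.1, h⟩))
  have hupto : ∀ s ∈ Icc 0 t₁, ∀ j, 0 ≤ y s j := by
    intro s hs j
    have hclosed := (hyj j).preimage_isClosed_of_isClosed isClosed_Ici (isClosed_Ici (a := 0))
    rw [← closure_Ico ht₁.ne] at hs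
    have hsub : Ico 0 t₁ ⊆ Ici 0 ∩ (fun t => y t j) ⁻¹' Ici 0 := fun s hs =>
      ⟨hs.1, hbefore s hs j⟩
    exact (hclosed.closure_subset_iff.2 hsub hs).2
  exact ⟨t₁, ht₁, hupto, k, le_antisymm hk₁ (hupto t₁ ⟨ht₁0, le_rfl⟩ k)⟩

theorem nonneg_of_hasDerivAt_of_neg_lower_bound {ι : Type*} [Finite ι] {T L : ℝ} (hT : 0 ≤ T)
    {x f : ℝ → ι → ℝ} (hxc : ContinuousOn x (Ici 0)) (hx : ∀ t > 0, HasDerivAt x (f t) t)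
    (hf : ∀ t > 0, ∀ E > 0, (∀ s ∈ Icc (-T) t, ∀ j, -E ≤ x s j) → ∀ k, x t k = -E →
      -(L * E) ≤ f t k)
    (hinit : ∀ s ∈ Icc (-T) 0, ∀ j, 0 ≤ x s j) :
    ∀ t ≥ 0, ∀ k, 0 ≤ x t k := by
  set M := |L| + 1
  have hperturbed : ∀ ε > 0, ∀ t ≥ 0, ∀ k, 0 < x t k + ε * Real.exp (M * t) := by
    intro ε hε
    by_contra! hneg
    set y : ℝ → ι → ℝ := fun t j => x t j + ε * Real.exp (M * t)
    have hy : ContinuousOn y (Ici 0) :=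
      continuousOn_pi.2 fun j => ((continuousOn_pi.1 hxc) j).add (by fun_prop)
    have hy0 : ∀ j, 0 < y 0 j := fun j => by
      simpa [y] using add_pos_of_nonneg_of_pos (hinit 0 ⟨by linarith, le_rfl⟩ j) hε
    obtain ⟨t₁, ht₁, hupto, k, hk⟩ := hy.exists_first_zero hy0 hneg
    set E := ε * Real.exp (M * t₁)
    have hE : 0 < E := by positivity
    have hbound : ∀ s ∈ Icc (-T) t₁, ∀ j, -E ≤ x s j := by
      intro s hs j
      rcases le_or_gt s 0 with hs0 | hs0
      · linarith [hinit s ⟨hs.1, hs0⟩ j]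
      · have hexp : Real.exp (M * s) ≤ Real.exp (M * t₁) :=
          Real.exp_le_exp.2 (mul_le_mul_of_nonneg_left hs.2 (by positivity))
        have := hupto s ⟨hs0.le, hs.2⟩ j
        simp only [y] at this
        nlinarith
    have hxk : x t₁ k = -E := by simp only [y] at hk; linarith
    have hderiv : HasDerivAt (fun t => y t k) (f t₁ k + ε * (Real.exp (M * t₁) * M)) t₁ :=
      (hasDerivAt_pi.1 (hx t₁ ht₁) k).add
        ((((hasDerivAt_id t₁).const_mul M).exp.congr_deriv (by simp [mul_comm])).const_mul ε)
    have hderiv_nonpos := hderiv.nonpos_of_forall_Ioo_le ht₁ fun s hs => by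
      rw [hk]; exact hupto s ⟨hs.1.le, hs.2.le⟩ k
    have hfk := hf t₁ ht₁ E hE hbound k hxk
    nlinarith [le_abs_self L]
  intro t ht k
  refine le_of_forall_pos_lt_add fun δ hδ => ?_
  have hexp := Real.exp_pos (M * t)
  simpa [div_mul_cancel₀ δ hexp.ne'] using
    hperturbed (δ / Real.exp (M * t)) (by positivity) t ht k

theorem IsMetzler.neg_mul_le_mulVec_apply {ι : Type*} [Fintype ι] {A : Matrix ι ι ℝ}
    (hA : IsMetzler A) {v : ι → ℝ} {E : ℝ} (hE : 0 ≤ E) (hv : ∀ j, -E ≤ v j) {k : ι}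
    (hk : v k = -E) : -((∑ j, |A k j|) * E) ≤ (A *ᵥ v) k := by
  rw [Finset.sum_mul, ← Finset.sum_neg_distrib]
  refine Finset.sum_le_sum fun j _ => ?_
  dsimp only
  rcases eq_or_ne k j with rfl | hkj
  · rw [hk]; nlinarith [mul_nonneg (sub_nonneg.2 (le_abs_self (A k k))) hE]
  · nlinarith [hA k j hkj, hv j, le_abs_self (A k j)]

theorem neg_setIntegral_mul_le_setIntegral_Ici_mul {q g : ℝ → ℝ} {T E : ℝ}
    (hq : ContinuousOn q (Icc 0 T)) (hqnn : ∀ τ ∈ Icc 0 T, 0 ≤ q τ)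
    (hqsupp : ∀ τ, τ ∉ Icc 0 T → q τ = 0) (hg : ContinuousOn g (Icc 0 T))
    (hgE : ∀ τ ∈ Icc 0 T, -E ≤ g τ) :
    -((∫ τ in Icc 0 T, q τ) * E) ≤ ∫ τ in Ici 0, q τ * g τ := by
  rw [setIntegral_eq_of_subset_of_forall_sdiff_eq_zero measurableSet_Ici Icc_subset_Ici_self
    fun τ hτ => by simp [hqsupp τ hτ.2]]
  calc -((∫ τ in Icc 0 T, q τ) * E) = ∫ τ in Icc 0 T, q τ * -E := by
        rw [integral_mul_const]; ring
    _ ≤ ∫ τ in Icc 0 T, q τ * g τ :=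
      setIntegral_mono_on ((hq.integrableOn_compact isCompact_Icc).mul_const _)
        ((hq.mul hg).integrableOn_compact isCompact_Icc) measurableSet_Icc fun τ hτ =>
          mul_le_mul_of_nonneg_left (hgE τ hτ) (hqnn τ hτ)

theorem integrableOn_Ici_mul_of_forall_notMem_Icc {q g : ℝ → ℝ} {T : ℝ}
    (hq : ContinuousOn q (Icc 0 T)) (hqsupp : ∀ τ, τ ∉ Icc 0 T → q τ = 0)
    (hg : ContinuousOn g (Icc 0 T)) : IntegrableOn (fun τ => q τ * g τ) (Ici 0) :=
  ((hq.mul hg).integrableOn_compact isCompact_Icc).of_forall_sdiff_eq_zero measurableSet_Ici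
    fun τ hτ => by simp [hqsupp τ hτ.2]

section SwitchedSystem

variable {n : ℕ} {T : ℝ} {σ : ℝ → Fin n} {A : Fin n → Matrix (Fin n) (Fin n) ℝ}
  {p d : Fin n → Fin n → ℝ} {q : Fin n → Fin n → ℝ → ℝ} {x : ℝ → Fin n → ℝ}

theorem neg_mul_le_swRHS_apply (hA : ∀ i, IsMetzler (A i)) (hp : ∀ i k, 0 ≤ p i k)
    (hd : ∀ i k, d i k ∈ Icc (0 : ℝ) T) (hqc : ∀ i k, Continuous (q i k))
    (hqnn : ∀ i k τ, 0 ≤ q i k τ) (hqsupp : ∀ i k, ∀ τ : ℝ, τ ∉ Icc (0 : ℝ) T → q i k τ = 0)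
    {t E : ℝ} (hE : 0 ≤ E) (hxc : ContinuousOn x (Icc (t - T) t))
    (hx : ∀ s ∈ Icc (t - T) t, ∀ j, -E ≤ x s j) {k : Fin n} (hk : x t k = -E) :
    -((∑ j, |A (σ t) k j| + p (σ t) k + ∫ τ in Icc 0 T, q (σ t) k τ) * E) ≤
      swRHS σ A p d q x t k := by
  set i := σ t
  have hshift : MapsTo (fun τ => t - τ) (Icc 0 T) (Icc (t - T) t) :=
    fun τ hτ => ⟨by linarith [hτ.2], by linarith [hτ.1]⟩
  have hxshift : ∀ j, ContinuousOn (fun τ => x (t - τ) j) (Icc 0 T) := fun j =>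
    (continuousOn_pi.1 hxc j).comp (by fun_prop) hshift
  have hT : 0 ≤ T := (hd i k).1.trans (hd i k).2
  have hmat := (hA i).neg_mul_le_mulVec_apply hE (hx t (right_mem_Icc.2 (by linarith))) hk
  have hdelay : -(p i k * E) ≤ p i k * x (t - d i k) k := by
    nlinarith [hp i k, hx (t - d i k) (hshift (hd i k)) k]
  have hint := neg_setIntegral_mul_le_setIntegral_Ici_mul (hqc i k).continuousOn
    (fun τ _ => hqnn i k τ) (hqsupp i k) (hxshift k) fun τ hτ => hx _ (hshift hτ) k
  rw [← eval_integral fun j => integrableOn_Ici_mul_of_forall_notMem_Icc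
    (hqc i j).continuousOn (hqsupp i j) (hxshift j)] at hint
  simp only [swRHS, Pi.add_apply]
  linarith

end SwitchedSystem

theorem stmt1_general (n : ℕ) (T : ℝ) (hT : 0 ≤ T)
    (σ : ℝ → Fin n)
    (A : Fin n → Matrix (Fin n) (Fin n) ℝ) (hA : ∀ i, IsMetzler (A i))
    (p : Fin n → Fin n → ℝ) (hp : ∀ i k, 0 ≤ p i k)
    (d : Fin n → Fin n → ℝ) (hd : ∀ i k, d i k ∈ Set.Icc (0 : ℝ) T)
    (q : Fin n → Fin n → ℝ → ℝ) (hqc : ∀ i k, Continuous (q i k))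
    (hqnn : ∀ i k τ, 0 ≤ q i k τ)
    (hqsupp : ∀ i k, ∀ τ : ℝ, τ ∉ Set.Icc (0 : ℝ) T → q i k τ = 0)
    (x : ℝ → Fin n → ℝ)
    (hxc : ContinuousOn x (Set.Ici (-T)))
    (hode : ∀ t > (0 : ℝ), HasDerivAt x (swRHS σ A p d q x t) t)
    (hinit : ∀ s ∈ Set.Icc (-T) (0 : ℝ), ∀ k, 0 ≤ x s k) :
    ∀ t ≥ (0 : ℝ), ∀ k, 0 ≤ x t k := by
  obtain ⟨L, hL⟩ := Finite.exists_le fun ik : Fin n × Fin n =>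
    ∑ j, |A ik.1 ik.2 j| + p ik.1 ik.2 + ∫ τ in Icc 0 T, q ik.1 ik.2 τ
  refine nonneg_of_hasDerivAt_of_neg_lower_bound (L := L) hT
    (hxc.mono (Ici_subset_Ici.2 (by linarith))) hode ?_ hinit
  intro t ht E hE hbound k hk
  have hrhs := neg_mul_le_swRHS_apply (σ := σ) hA hp hd hqc hqnn hqsupp hE.le
    (hxc.mono fun s hs => le_trans (by linarith) hs.1)
    (fun s hs => hbound s ⟨by linarith [hs.1], hs.2⟩) hk
  nlinarith [hL (σ t, k)]

/-- positivity of solutions of the switched positive linear delay system. -/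
theorem stmt1 (n : ℕ) (T : ℝ) (hT : 0 ≤ T)
    (σ : ℝ → Fin n) (hσ : PiecewiseConstant σ)
    (A : Fin n → Matrix (Fin n) (Fin n) ℝ) (hA : ∀ i, IsMetzler (A i))
    (p : Fin n → Fin n → ℝ) (hp : ∀ i k, 0 ≤ p i k)
    (d : Fin n → Fin n → ℝ) (hd : ∀ i k, d i k ∈ Set.Icc (0 : ℝ) T)
    (q : Fin n → Fin n → ℝ → ℝ) (hqc : ∀ i k, Continuous (q i k))
    (hqnn : ∀ i k τ, 0 ≤ q i k τ)
    (hqsupp : ∀ i k, ∀ τ : ℝ, τ ∉ Set.Icc (0 : ℝ) T → q i k τ = 0)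
    (x : ℝ → Fin n → ℝ)
    (hxc : ContinuousOn x (Set.Ici (-T)))
    (hode : ∀ t > (0 : ℝ), HasDerivAt x (swRHS σ A p d q x t) t)
    (hode0 : HasDerivWithinAt x (swRHS σ A p d q x 0) (Set.Ici (0 : ℝ)) 0)
    (hinit : ∀ s ∈ Set.Icc (-T) (0 : ℝ), ∀ k, 0 ≤ x s k) :
    ∀ t ≥ (0 : ℝ), ∀ k, 0 ≤ x t k :=
  stmt1_general n T hT σ A hA p hp d hd q hqc hqnn hqsupp x hxc hode hinit
end
end

section
/- Let (Ω, ℳ, P) be a probability space and 𝒢 ⊆ ℳ a sub-σ-algebra. Let Π be an n×n real matrix and h ≥ 0. Let η' : Ω → ℝⁿ be 𝒢-measurable and almost surely equal to a canonical basis vector of ℝⁿ, let y : Ω → ℝⁿ be 𝒢-measurable, integrable, and nonnegative componentwise almost surely, and let η : Ω → ℝⁿ be a bounded random vector with conditional expectation E[η | 𝒢] = e^{Πᵀh} η' almost surely. Then for every i ∈ {1,…,n}, E[ηᵢ y] = ((uᵢᵀ e^{Πᵀh}) ⊗ Iₙ) E[η' ⊗ y], where the right-hand side applies the n×n² matrix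 (uᵢᵀ e^{Πᵀh}) ⊗ Iₙ to the vector E[η' ⊗ y] ∈ ℝ^{n²}. -/
open MeasureTheory Matrix
open scoped Kronecker

noncomputable section

/-- if `E[η | 𝒢] = e^{Piᵀh} η'` with `η'` a `𝒢`-measurable random canonical
basis vector and `y ≥ 0` a `𝒢`-measurable integrable random vector, then
`E[ηᵢ y] = ((uᵢᵀ e^{Piᵀh}) ⊗ Iₙ) E[η' ⊗ y]` for every `i`. -/
theorem stmt5 (n : ℕ) {Ω : Type*} (𝒢 : MeasurableSpace Ω) [mΩ : MeasurableSpace Ω]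
    (μ : Measure Ω) [IsProbabilityMeasure μ]
    (h𝒢 : 𝒢 ≤ mΩ)
    (Pi : Matrix (Fin n) (Fin n) ℝ) (h : ℝ) (hh : 0 ≤ h)
    (η' : Ω → Fin n → ℝ) (hη'meas : Measurable[𝒢] η')
    (hη'basis : ∀ᵐ ω ∂μ, ∃ i : Fin n, η' ω = basisVec i)
    (y : Ω → Fin n → ℝ) (hymeas : Measurable[𝒢] y)
    (hyint : Integrable y μ) (hynn : ∀ᵐ ω ∂μ, ∀ k, 0 ≤ y ω k)
    (η : Ω → Fin n → ℝ) (hηmeas : Measurable η)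
    (hηbdd : ∃ Cb : ℝ, ∀ ω k, |η ω k| ≤ Cb)
    (hcond : μ[η | 𝒢] =ᵐ[μ] fun ω => (matExp (h • Pi.transpose)).mulVec (η' ω)) :
    ∀ i : Fin n,
      (∫ ω, η ω i • y ω ∂μ) =
        (rowKronId fun a => matExp (h • Pi.transpose) i a).mulVec
          (∫ ω, vecKron (η' ω) (y ω) ∂μ) := by

  classical
  intro i
  letI : MeasurableSpace Ω := mΩ
  haveI : SigmaFinite (μ.trim h𝒢) := by infer_instance
  set M : Matrix (Fin n) (Fin n) ℝ := matExp (h • Pi.transpose) with hM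
  obtain ⟨Cb, hCb⟩ := hηbdd
  set C : ℝ := max Cb 0 with hC
  have hC0 : (0:ℝ) ≤ C := le_max_right _ _
  have hCb' : ∀ ω k, |η ω k| ≤ C := fun ω k => (hCb ω k).trans (le_max_left _ _)
  have hη'bd : ∀ᵐ ω ∂μ, ∀ a, |η' ω a| ≤ 1 := by
    filter_upwards [hη'basis] with ω hω a
    obtain ⟨i₀, hi₀⟩ := hω
    rw [hi₀]; simp only [basisVec]; split <;> simp
  have hη'measΩ : Measurable[mΩ] η' := hη'meas.mono h𝒢 le_rfl
  have hymeasΩ : Measurable[mΩ] y := hymeas.mono h𝒢 le_rfl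
  have hηmeasΩ : Measurable[mΩ] η := hηmeas
  have hη_int : Integrable η μ := by
    refine Integrable.mono' (integrable_const C) hηmeasΩ.aestronglyMeasurable ?_
    refine Filter.Eventually.of_forall fun ω => ?_
    rw [pi_norm_le_iff_of_nonneg hC0]
    intro k; simpa [Real.norm_eq_abs] using hCb' ω k
  have hy_int : ∀ k : Fin n, Integrable (fun ω => y ω k) μ := fun k =>
    (ContinuousLinearMap.proj (R := ℝ) (φ := fun _ : Fin n => ℝ) k).integrable_comp hyint
  have hηi_int : ∀ j : Fin n, Integrable (fun ω => η ω j) μ := fun j =>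
    (ContinuousLinearMap.proj (R := ℝ) (φ := fun _ : Fin n => ℝ) j).integrable_comp hη_int
  set S : ℝ := ∑ b : Fin n, ∑ a : Fin n, |M b a| with hSdef
  have hS0 : (0:ℝ) ≤ S :=
    Finset.sum_nonneg fun b _ => Finset.sum_nonneg fun a _ => abs_nonneg _
  have hMη'measΩ : Measurable[mΩ] fun ω => M.mulVec (η' ω) := by
    refine measurable_pi_lambda _ fun k => ?_
    simp only [Matrix.mulVec, dotProduct]
    exact Finset.measurable_sum _ fun a _ =>
      measurable_const.mul ((measurable_pi_apply a).comp hη'measΩ)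
  have hMη'_int : Integrable (fun ω => M.mulVec (η' ω)) μ := by
    refine Integrable.mono' (integrable_const S) hMη'measΩ.aestronglyMeasurable ?_
    filter_upwards [hη'bd] with ω hbd
    rw [pi_norm_le_iff_of_nonneg hS0]
    intro k
    have h1 : |M.mulVec (η' ω) k| ≤ ∑ a, |M k a| * |η' ω a| := by
      simpa [Matrix.mulVec, dotProduct, abs_mul] using
        Finset.abs_sum_le_sum_abs (fun a => M k a * η' ω a) Finset.univ
    have h2 : ∑ a, |M k a| * |η' ω a| ≤ ∑ a, |M k a| := by
      refine Finset.sum_le_sum fun a _ => ?_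
      simpa using mul_le_mul_of_nonneg_left (hbd a) (abs_nonneg (M k a))
    have h3 : ∑ a, |M k a| ≤ S := by
      refine Finset.single_le_sum (f := fun b => ∑ a, |M b a|) ?_ (Finset.mem_univ k)
      exact fun b _ => Finset.sum_nonneg fun a _ => abs_nonneg _
    simpa [Real.norm_eq_abs] using (h1.trans h2).trans h3
  have hcond_i : (fun ω => M.mulVec (η' ω) i) =ᵐ[μ] μ[(fun ω => η ω i) | 𝒢] := by
    refine ae_eq_condExp_of_forall_setIntegral_eq h𝒢 (hηi_int i) ?_ ?_ ?_
    · intro s _ _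
      exact ((ContinuousLinearMap.proj (R := ℝ) (φ := fun _ : Fin n => ℝ) i).integrable_comp
        hMη'_int).integrableOn
    · intro s hs _
      have hs' : MeasurableSet[mΩ] s := h𝒢 s hs
      have e1 : (∫ ω in s, M.mulVec (η' ω) ∂μ) i = ∫ ω in s, M.mulVec (η' ω) i ∂μ := by
        simpa using ((ContinuousLinearMap.proj (R := ℝ) (φ := fun _ : Fin n => ℝ)
          i).integral_comp_comm (hMη'_int.restrict (s := s))).symm
      have e2 : (∫ ω in s, η ω ∂μ) i = ∫ ω in s, η ω i ∂μ := by
        simpa using ((ContinuousLinearMap.proj (R := ℝ) (φ := fun _ : Fin n => ℝ)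
          i).integral_comp_comm (hη_int.restrict (s := s))).symm
      rw [← e1, ← e2]
      have e3 : ∫ ω in s, M.mulVec (η' ω) ∂μ = ∫ ω in s, η ω ∂μ := by
        rw [← setIntegral_condExp h𝒢 hη_int hs]
        exact setIntegral_congr_ae hs' (hcond.mono fun ω hω => fun _ => hω.symm)
      rw [e3]
    · refine StronglyMeasurable.aestronglyMeasurable ?_
      have hme : Measurable[𝒢] fun ω => M.mulVec (η' ω) i := by
        simp only [Matrix.mulVec, dotProduct]
        exact Finset.measurable_sum _ fun a _ =>
          measurable_const.mul ((measurable_pi_apply a).comp hη'meas)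
      exact hme.stronglyMeasurable
  have hη'y_int : ∀ (a k : Fin n), Integrable (fun ω => η' ω a * y ω k) μ := by
    intro a k
    refine Integrable.bdd_mul (c := 1) (hy_int k) ?_ ?_
    · exact ((measurable_pi_apply a).comp hη'measΩ).aestronglyMeasurable
    · filter_upwards [hη'bd] with ω hbd using by simpa [Real.norm_eq_abs] using hbd a
  have hvk_int : Integrable (fun ω => vecKron (η' ω) (y ω)) μ := by
    refine Integrable.mono' hyint.norm ?_ ?_
    · refine Measurable.aestronglyMeasurable (measurable_pi_lambda _ fun p => ?_)
      exact ((measurable_pi_apply p.1).comp hη'measΩ).mul ((measurable_pi_apply p.2).comp hymeasΩ)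
    · filter_upwards [hη'bd] with ω hbd
      rw [pi_norm_le_iff_of_nonneg (norm_nonneg _)]
      intro p
      calc ‖vecKron (η' ω) (y ω) p‖ = |η' ω p.1| * |y ω p.2| := by
            simp [vecKron, Real.norm_eq_abs, abs_mul]
        _ ≤ 1 * ‖y ω‖ :=
            mul_le_mul (hbd p.1) (by simpa [Real.norm_eq_abs] using norm_le_pi_norm (y ω) p.2)
              (abs_nonneg _) zero_le_one
        _ = ‖y ω‖ := one_mul _
  have key : ∀ k : Fin n, ∫ ω, η ω i * y ω k ∂μ = ∑ a, M i a * ∫ ω, η' ω a * y ω k ∂μ := by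
    intro k
    have hyk_sm : StronglyMeasurable[𝒢] fun ω => y ω k :=
      ((measurable_pi_apply k).comp hymeas).stronglyMeasurable
    have hprod : Integrable (fun ω => η ω i * y ω k) μ :=
      Integrable.bdd_mul (c := C) (hy_int k) ((measurable_pi_apply i).comp hηmeasΩ).aestronglyMeasurable
        (Filter.Eventually.of_forall fun ω => by simpa [Real.norm_eq_abs] using hCb' ω i)
    have hyη_int : Integrable ((fun ω => y ω k) * fun ω => η ω i) μ :=
      hprod.congr (Filter.Eventually.of_forall fun ω => mul_comm _ _)
    have step1 : ∫ ω, η ω i * y ω k ∂μ = ∫ ω, y ω k * η ω i ∂μ :=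
      integral_congr_ae (Filter.Eventually.of_forall fun ω => mul_comm _ _)
    have step2 : ∫ ω, y ω k * η ω i ∂μ = ∫ ω, (μ[((fun ω => y ω k) * fun ω => η ω i) | 𝒢]) ω ∂μ :=
      (integral_condExp h𝒢).symm
    have step3 : ∫ ω, (μ[((fun ω => y ω k) * fun ω => η ω i) | 𝒢]) ω ∂μ
        = ∫ ω, y ω k * (μ[(fun ω => η ω i) | 𝒢]) ω ∂μ :=
      integral_congr_ae (condExp_mul_of_stronglyMeasurable_left hyk_sm hyη_int (hηi_int i))
    have step4 : ∫ ω, y ω k * (μ[(fun ω => η ω i) | 𝒢]) ω ∂μ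
        = ∫ ω, y ω k * M.mulVec (η' ω) i ∂μ := by
      refine integral_congr_ae ?_
      filter_upwards [hcond_i] with ω hω
      rw [← hω]
    have step5 : ∫ ω, y ω k * M.mulVec (η' ω) i ∂μ
        = ∑ a, M i a * ∫ ω, η' ω a * y ω k ∂μ := by
      have hrw : ∀ ω, y ω k * M.mulVec (η' ω) i = ∑ a, M i a * (η' ω a * y ω k) := by
        intro ω
        simp only [Matrix.mulVec, dotProduct, Finset.mul_sum]
        exact Finset.sum_congr rfl fun a _ => by ring
      simp_rw [hrw]
      rw [integral_finset_sum _ fun a _ => (hη'y_int a k).const_mul (M i a)]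
      exact Finset.sum_congr rfl fun a _ => integral_const_mul _ _
    rw [step1, step2, step3, step4, step5]
  have hsy_int : Integrable (fun ω => η ω i • y ω) μ := by
    refine Integrable.mono' (hyint.norm.const_mul C) ?_ ?_
    · exact (((measurable_pi_apply i).comp hηmeasΩ).smul hymeasΩ).aestronglyMeasurable
    · refine Filter.Eventually.of_forall fun ω => ?_
      rw [norm_smul, Real.norm_eq_abs]
      exact mul_le_mul_of_nonneg_right (hCb' ω i) (norm_nonneg _)
  funext k
  have lhs : (∫ ω, η ω i • y ω ∂μ) k = ∫ ω, η ω i * y ω k ∂μ := by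
    simpa using ((ContinuousLinearMap.proj (R := ℝ) (φ := fun _ : Fin n => ℝ)
      k).integral_comp_comm hsy_int).symm
  have rhsv : ∀ p : Fin n × Fin n,
      (∫ ω, vecKron (η' ω) (y ω) ∂μ) p = ∫ ω, η' ω p.1 * y ω p.2 ∂μ := by
    intro p
    simpa [vecKron] using ((ContinuousLinearMap.proj (R := ℝ) (φ := fun _ : Fin n × Fin n => ℝ)
      p).integral_comp_comm hvk_int).symm
  rw [lhs, key k]
  simp only [Matrix.mulVec, dotProduct, rowKronId, Matrix.of_apply]
  rw [Fintype.sum_prod_type]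
  refine Finset.sum_congr rfl fun a _ => ?_
  rw [Finset.sum_eq_single k]
  · rw [rhsv (a, k)]; simp
  · intro b _ hbk; simp [Ne.symm hbk]
  · intro hk; exact absurd (Finset.mem_univ k) hk
end
end

section
/- Let (Ω, ℳ, P) be a probability space with a filtration (𝓕_s)_{s≥0}, let Π be an n×n real matrix, and fix t ≥ 0, i ∈ {1,…,n}, constants pᵢ¹,…,pᵢⁿ ≥ 0 and delays dᵢ¹,…,dᵢⁿ ∈ [0,t]. Suppose that for every s ∈ [0,t], η(s) : Ω → ℝⁿ is 𝓕_s-measurable and almost surely equal to a canonical basis vector, x(s) : Ω → ℝⁿ is 𝓕_s-measurable, integrable, and componentwise nonnegative almost surely, and that for each j ∈ {1,…,n}, E[η(t) | 𝓕_{t−dᵢʲ}] = e^{Πᵀdᵢʲ} η(t−dᵢʲ) almost surely. Define (𝒫ᵢx)(t) ∈ ℝⁿ by its j-th component pᵢʲ x_j(t−dᵢʲ), define ζ(s) = E[η(s) ⊗ x(s)] ∈ ℝ^{n²}, and define the n×n² matrices f_{ij} = pᵢʲ ((U_{ji} e^{Πᵀdᵢʲ}) ⊗ u_jᵀ). Then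 E[ηᵢ(t)(𝒫ᵢx)(t)] = Σ_{j=1}^{n} f_{ij} ζ(t−dᵢʲ). -/
open MeasureTheory Matrix
open scoped Kronecker

noncomputable section

/-
In the `j`-th summand on the right only the `j`-th entry is nonzero, so it suffices to compare
`pᵢᵏ E[ηᵢ(t) x_k(t - dᵢᵏ)]` with the `k`-th summand. Conditioning on `𝓕_{t - dᵢᵏ}`, with respect
to which `x_k(t - dᵢᵏ)` is measurable, turns `E[ηᵢ(t) x_k(t - dᵢᵏ)]` into
`E[(e^{Πᵀ dᵢᵏ} η(t - dᵢᵏ))ᵢ x_k(t - dᵢᵏ)] = ∑ₐ (e^{Πᵀ dᵢᵏ})ᵢₐ E[ηₐ(t - dᵢᵏ) x_k(t - dᵢᵏ)]`,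
and `E[ηₐ(t - dᵢᵏ) x_k(t - dᵢᵏ)]` is the `(a, k)` entry of `ζ(t - dᵢᵏ)`. Since `η` takes values
in basis vectors it is bounded, which provides all the integrability needed.
-/

section Integrability

variable {Ω : Type*} [MeasurableSpace Ω] {μ : Measure Ω} {n : ℕ}

lemma norm_basisVec_apply_le_one (a b : Fin n) : ‖basisVec a b‖ ≤ 1 := by
  unfold basisVec
  split_ifs <;> norm_num

lemma integrable_apply_mul_of_ae_basisVec {η : Ω → Fin n → ℝ} (hη : AEStronglyMeasurable η μ)
    (hbasis : ∀ᵐ ω ∂μ, ∃ a, η ω = basisVec a) {g : Ω → ℝ} (hg : Integrable g μ) (b : Fin n) :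
    Integrable (fun ω => η ω b * g ω) μ := by
  refine hg.bdd_mul (c := 1) (Continuous.comp_aestronglyMeasurable (continuous_apply b) hη) ?_
  filter_upwards [hbasis] with ω ⟨a, ha⟩
  rw [ha]
  exact norm_basisVec_apply_le_one a b

lemma integrable_of_ae_basisVec [IsFiniteMeasure μ] {η : Ω → Fin n → ℝ}
    (hη : AEStronglyMeasurable η μ) (hbasis : ∀ᵐ ω ∂μ, ∃ a, η ω = basisVec a) :
    Integrable η μ :=
  Integrable.of_eval fun b => by
    simpa using integrable_apply_mul_of_ae_basisVec hη hbasis (integrable_const (1 : ℝ)) b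

end Integrability

section CondExp

variable {Ω ι : Type*} [Fintype ι] {m mΩ : MeasurableSpace Ω} {μ : Measure Ω}

lemma condExp_apply_ae_eq {f : Ω → ι → ℝ} (hf : Integrable f μ) (i : ι) :
    (fun ω => μ[f|m] ω i) =ᵐ[μ] μ[fun ω => f ω i | m] :=
  (ContinuousLinearMap.proj (R := ℝ) (φ := fun _ : ι => ℝ) i).comp_condExp_comm hf

lemma integral_mul_eq_integral_condExp_mul [IsFiniteMeasure μ] (hm : m ≤ mΩ) {f g : Ω → ℝ}
    (hf : Integrable f μ) (hg : StronglyMeasurable[m] g) (hfg : Integrable (f * g) μ) :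
    ∫ ω, f ω * g ω ∂μ = ∫ ω, μ[f|m] ω * g ω ∂μ :=
  calc ∫ ω, f ω * g ω ∂μ = ∫ ω, μ[f * g|m] ω ∂μ := (integral_condExp hm).symm
    _ = ∫ ω, μ[f|m] ω * g ω ∂μ :=
      integral_congr_ae (condExp_mul_of_stronglyMeasurable_right hg hfg hf)

lemma integral_apply_mul_eq_sum_of_condExp_eq_mulVec [IsFiniteMeasure μ] (hm : m ≤ mΩ)
    {f h : Ω → ι → ℝ} {g : Ω → ℝ} {A : Matrix ι ι ℝ} (hf : Integrable f μ)
    (hcond : μ[f|m] =ᵐ[μ] fun ω => A *ᵥ h ω) (hg : StronglyMeasurable[m] g) (i : ι)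
    (hfg : Integrable (fun ω => f ω i * g ω) μ) (hhg : ∀ a, Integrable (fun ω => h ω a * g ω) μ) :
    ∫ ω, f ω i * g ω ∂μ = ∑ a, A i a * ∫ ω, h ω a * g ω ∂μ := by
  calc ∫ ω, f ω i * g ω ∂μ = ∫ ω, μ[fun ω => f ω i|m] ω * g ω ∂μ :=
        integral_mul_eq_integral_condExp_mul hm (hf.eval i) hg hfg
    _ = ∫ ω, (A *ᵥ h ω) i * g ω ∂μ := by
        refine integral_congr_ae ?_
        filter_upwards [condExp_apply_ae_eq hf i, hcond] with ω hcoord hω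
        rw [← hcoord, hω]
    _ = ∫ ω, ∑ a, A i a * (h ω a * g ω) ∂μ := by
        simp only [mulVec, dotProduct, Finset.sum_mul, mul_assoc]
    _ = ∑ a, A i a * ∫ ω, h ω a * g ω ∂μ := by
        rw [integral_finsetSum _ fun a _ => (hhg a).const_mul _]
        simp only [integral_const_mul]

end CondExp

lemma smul_matKronRow_single_mul_basisVec_mulVec {n : ℕ} (c : ℝ) (i j : Fin n)
    (A : Matrix (Fin n) (Fin n) ℝ) (z : Fin n × Fin n → ℝ) :
    (c • matKronRow (single j i 1 * A) (basisVec j)) *ᵥ z =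
      Pi.single j (c * ∑ a, A i a * z (a, j)) := by
  ext k
  rw [smul_mulVec, Pi.smul_apply]
  simp only [mulVec, dotProduct, matKronRow, basisVec, of_apply, Fintype.sum_prod_type, mul_ite,
    mul_one, mul_zero]
  rcases eq_or_ne k j with rfl | hkj
  · simp [Finset.mul_sum]
  · simp [hkj]

theorem stmt6_general (n : ℕ) {Ω : Type*} [mΩ : MeasurableSpace Ω]
    (μ : Measure Ω) [IsProbabilityMeasure μ]
    (𝓕 : Filtration ℝ mΩ)
    (Pi : Matrix (Fin n) (Fin n) ℝ)
    (t : ℝ) (ht : 0 ≤ t) (i : Fin n)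
    (p : Fin n → ℝ)
    (d : Fin n → ℝ) (hd : ∀ j, d j ∈ Set.Icc (0 : ℝ) t)
    (η : ℝ → Ω → Fin n → ℝ) (x : ℝ → Ω → Fin n → ℝ)
    (hηmeas : ∀ s ∈ Set.Icc (0 : ℝ) t, Measurable[𝓕 s] (η s))
    (hηbasis : ∀ s ∈ Set.Icc (0 : ℝ) t, ∀ᵐ ω ∂μ, ∃ a : Fin n, η s ω = basisVec a)
    (hxmeas : ∀ s ∈ Set.Icc (0 : ℝ) t, Measurable[𝓕 s] (x s))
    (hxint : ∀ s ∈ Set.Icc (0 : ℝ) t, Integrable (x s) μ)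
    (hcond : ∀ j : Fin n,
      μ[η t | 𝓕 (t - d j)] =ᵐ[μ]
        fun ω => (matExp (d j • Pi.transpose)).mulVec (η (t - d j) ω)) :
    (∫ ω, η t ω i • (fun j => p j * x (t - d j) ω j) ∂μ) =
      ∑ j : Fin n,
        (p j • matKronRow (Matrix.single j i (1 : ℝ) * matExp (d j • Pi.transpose))
            (basisVec j)).mulVec
          (∫ ω, vecKron (η (t - d j) ω) (x (t - d j) ω) ∂μ) := by
  have hdelay (j : Fin n) : t - d j ∈ Set.Icc (0 : ℝ) t :=
    ⟨by linarith [(hd j).2], by linarith [(hd j).1]⟩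
  have hηae {s} (hs : s ∈ Set.Icc (0 : ℝ) t) : AEStronglyMeasurable (η s) μ :=
    ((hηmeas s hs).mono (𝓕.le s) le_rfl).aestronglyMeasurable
  have hηx {s s'} (hs : s ∈ Set.Icc (0 : ℝ) t) (hs' : s' ∈ Set.Icc (0 : ℝ) t) (a b : Fin n) :
      Integrable (fun ω => η s ω a * x s' ω b) μ :=
    integrable_apply_mul_of_ae_basisVec (hηae hs) (hηbasis s hs) ((hxint s' hs').eval b) a
  have hζ (j : Fin n) : ∫ ω, vecKron (η (t - d j) ω) (x (t - d j) ω) ∂μ =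
      fun q => ∫ ω, η (t - d j) ω q.1 * x (t - d j) ω q.2 ∂μ :=
    funext (eval_integral fun q => hηx (hdelay j) (hdelay j) q.1 q.2)
  have htt : t ∈ Set.Icc (0 : ℝ) t := ⟨ht, le_rfl⟩
  have hdelayed (j : Fin n) : ∫ ω, η t ω i * x (t - d j) ω j ∂μ =
      ∑ a, matExp (d j • Pi.transpose) i a * ∫ ω, η (t - d j) ω a * x (t - d j) ω j ∂μ :=
    integral_apply_mul_eq_sum_of_condExp_eq_mulVec (𝓕.le _)
      (integrable_of_ae_basisVec (hηae htt) (hηbasis t htt)) (hcond j)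
      ((measurable_pi_apply j).comp (hxmeas _ (hdelay j))).stronglyMeasurable i
      (hηx htt (hdelay j) i j) fun a => hηx (hdelay j) (hdelay j) a j
  simp_rw [hζ, smul_matKronRow_single_mul_basisVec_mulVec, LinearMap.sum_single_apply]
  ext k
  rw [eval_integral fun j => ((hηx htt (hdelay j) i j).const_mul (p j)).congr
    (.of_forall fun ω => by simp [mul_left_comm]), ← hdelayed k, ← integral_const_mul]
  congr 1 with ω
  exact mul_left_comm _ _ _

/-- `E[ηᵢ(t) (𝒫ᵢ x)(t)] = ∑ⱼ f_{ij} ζ(t − dᵢʲ)`, where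
`f_{ij} = pᵢʲ ((U_{ji} e^{Πᵀ dᵢʲ}) ⊗ uⱼᵀ)` and `ζ(s) = E[η(s) ⊗ x(s)]`. -/
theorem stmt6 (n : ℕ) {Ω : Type*} [mΩ : MeasurableSpace Ω]
    (μ : Measure Ω) [IsProbabilityMeasure μ]
    (𝓕 : Filtration ℝ mΩ)
    (Pi : Matrix (Fin n) (Fin n) ℝ)
    (t : ℝ) (ht : 0 ≤ t) (i : Fin n)
    (p : Fin n → ℝ) (hp : ∀ j, 0 ≤ p j)
    (d : Fin n → ℝ) (hd : ∀ j, d j ∈ Set.Icc (0 : ℝ) t)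
    (η : ℝ → Ω → Fin n → ℝ) (x : ℝ → Ω → Fin n → ℝ)
    (hηmeas : ∀ s ∈ Set.Icc (0 : ℝ) t, Measurable[𝓕 s] (η s))
    (hηbasis : ∀ s ∈ Set.Icc (0 : ℝ) t, ∀ᵐ ω ∂μ, ∃ a : Fin n, η s ω = basisVec a)
    (hxmeas : ∀ s ∈ Set.Icc (0 : ℝ) t, Measurable[𝓕 s] (x s))
    (hxint : ∀ s ∈ Set.Icc (0 : ℝ) t, Integrable (x s) μ)
    (hxnn : ∀ s ∈ Set.Icc (0 : ℝ) t, ∀ᵐ ω ∂μ, ∀ k, 0 ≤ x s ω k)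
    (hcond : ∀ j : Fin n,
      μ[η t | 𝓕 (t - d j)] =ᵐ[μ]
        fun ω => (matExp (d j • Pi.transpose)).mulVec (η (t - d j) ω)) :
    (∫ ω, η t ω i • (fun j => p j * x (t - d j) ω j) ∂μ) =
      ∑ j : Fin n,
        (p j • matKronRow (Matrix.single j i (1 : ℝ) * matExp (d j • Pi.transpose))
            (basisVec j)).mulVec
          (∫ ω, vecKron (η (t - d j) ω) (x (t - d j) ω) ∂μ) :=
  stmt6_general n (mΩ := mΩ) μ 𝓕 Pi t ht i p d hd η x hηmeas hηbasis hxmeas hxint hcond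
end
end
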